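/- arXiv:2412.15368 — 6 statements merged into one kernel-verified Lean document; each statement's English description precedes it below -/
import Mathlib

section
/- Suppose the set {n ≥ 2 : I^n M ∩ N ≠ I·(I^{n-1} M ∩ N)} is finite of cardinality r−1 for some integer r ≥ 1. Then for all n ≥ r, I^n M ∩ N ⊆ I^{n-r}·N. In other words, the weak Artin-Rees number w(N,M;I) is at most the medium Artin-Rees number m(N,M;I). -/
/-! Put `F k = I^k M ∩ N`, a descending chain inside `N`. Whenever `F k = I·F (k-1)` one more
factor of `I` is gained, and otherwise `F k ⊆ F (k-1)` loses nothing; so `F n ⊆ I^g N` where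
`g` counts the indices `2 ≤ k ≤ n` with `E_k = 0`. At most `r - 1` of the `n - 1` indices in
`[2, n]` have `E_k ≠ 0`, hence `g ≥ n - r`. -/

open Finset

open Classical in
theorem Submodule.le_pow_card_smul_of_antitone {A M : Type*} [CommRing A] [AddCommGroup M]
    [Module A M] {I : Ideal A} {N : Submodule A M}
    {F : ℕ → Submodule A M} (hF : Antitone F) (hF1 : F 1 ≤ N) {n : ℕ} (hn : 1 ≤ n) :
    F n ≤ I ^ #{k ∈ Icc 2 n | F k ≤ I • F (k - 1)} • N := by
  induction n, hn using Nat.le_induction with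
  | base => simpa using hF1
  | succ n hn ih =>
    rw [← insert_Icc_right_eq_Icc_add_one (by omega : 2 ≤ n + 1), filter_insert]
    have hnotMem : n + 1 ∉ {k ∈ Icc 2 n | F k ≤ I • F (k - 1)} := by simp
    split_ifs with hgood
    · rw [card_insert_of_notMem hnotMem, pow_succ', mul_smul]
      exact hgood.trans (smul_mono_right I ih)
    · exact (hF n.le_succ).trans ih

theorem Nat.sub_one_sub_ncard_le_card_filter_Icc {p : ℕ → Prop} [DecidablePred p] {s : Set ℕ}
    (hs : s.Finite) (hbad : ∀ k, 2 ≤ k → ¬ p k → k ∈ s) (n : ℕ) :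
    n - 1 - s.ncard ≤ #{k ∈ Icc 2 n | p k} := by
  have hbad_le : #{k ∈ Icc 2 n | ¬ p k} ≤ s.ncard := by
    rw [← Set.ncard_coe_finset]
    refine Set.ncard_le_ncard (fun k hk => ?_) hs
    simp only [coe_filter, mem_Icc, Set.mem_ofPred_eq] at hk
    exact hbad k hk.1.1 hk.2
  have hsplit : #{k ∈ Icc 2 n | p k} + #{k ∈ Icc 2 n | ¬ p k} = n + 1 - 2 :=
    (card_filter_add_card_filter_not _).trans (Nat.card_Icc 2 n)
  omega

theorem stmt_2_general {A : Type*} [CommRing A]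
    {M : Type*} [AddCommGroup M] [Module A M]
    (I : Ideal A) (N : Submodule A M) (r : ℕ) (hr : 1 ≤ r)
    (hfin : {n : ℕ | 2 ≤ n ∧
      (I ^ n • ⊤ ⊓ N : Submodule A M) ≠ I • (I ^ (n - 1) • ⊤ ⊓ N)}.Finite)
    (hcard : {n : ℕ | 2 ≤ n ∧
      (I ^ n • ⊤ ⊓ N : Submodule A M) ≠ I • (I ^ (n - 1) • ⊤ ⊓ N)}.ncard = r - 1) :
    ∀ n, r ≤ n → (I ^ n • ⊤ ⊓ N : Submodule A M) ≤ I ^ (n - r) • N := by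
  classical
  intro n hn
  set F : ℕ → Submodule A M := fun k => I ^ k • ⊤ ⊓ N
  have hF : Antitone F := fun j k hjk =>
    inf_le_inf_right N (Submodule.smul_mono_left (Ideal.pow_le_pow_right hjk))
  have hgood := Nat.sub_one_sub_ncard_le_card_filter_Icc (p := fun k => F k ≤ I • F (k - 1))
    hfin (fun k hk hbad => ⟨hk, fun h => hbad h.le⟩) n
  calc F n ≤ I ^ #{k ∈ Icc 2 n | F k ≤ I • F (k - 1)} • N :=
        Submodule.le_pow_card_smul_of_antitone hF inf_le_right (hr.trans hn)
    _ ≤ I ^ (n - r) • N := Submodule.smul_mono_left (Ideal.pow_le_pow_right (by omega))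

/-- If the set `{n ≥ 2 : I^n M ∩ N ≠ I·(I^{n-1} M ∩ N)}` is finite of
cardinality `r-1` for some `r ≥ 1`, then for all `n ≥ r`, `I^n M ∩ N ⊆ I^{n-r}·N`
(i.e. the weak Artin-Rees number is at most the medium Artin-Rees number). -/
theorem stmt_2 {A : Type*} [CommRing A] [IsNoetherianRing A]
    {M : Type*} [AddCommGroup M] [Module A M] [Module.Finite A M]
    (I : Ideal A) (N : Submodule A M) (r : ℕ) (hr : 1 ≤ r)
    (hfin : {n : ℕ | 2 ≤ n ∧
      (I ^ n • ⊤ ⊓ N : Submodule A M) ≠ I • (I ^ (n - 1) • ⊤ ⊓ N)}.Finite)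
    (hcard : {n : ℕ | 2 ≤ n ∧
      (I ^ n • ⊤ ⊓ N : Submodule A M) ≠ I • (I ^ (n - 1) • ⊤ ⊓ N)}.ncard = r - 1) :
    ∀ n, r ≤ n → (I ^ n • ⊤ ⊓ N : Submodule A M) ≤ I ^ (n - r) • N :=
  stmt_2_general I N r hr hfin hcard
end

section
/- For every n ≥ 2: if L̄_n = V̄_1·L̄_{n-1}, then I^n ∩ J = I·(I^{n-1} ∩ J). Equivalently, if E(I;A/J)_n = 0 then the n-th Artin-Rees module E(J,A;I)_n = (I^n ∩ J)/I·(I^{n-1} ∩ J) vanishes; consequently the strong Artin-Rees number s(J,A;I) is at most the relation type rt(I;A/J) and the medium Artin-Rees number m(J,A;I) is at most the sifted type st(I;A/J). -/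
/-- The `A`-submodule of homogeneous elements of degree `n` in the kernel `L` of the
presentation `φ : A[X_1,…,X_r] → A[t]`, `X_i ↦ x_i t`, of the Rees algebra of the ideal
`I = (x_1,…,x_r)`; i.e. the degree-`n` equations `L_n` of the Rees algebra. -/
noncomputable def reesRel {A : Type*} [CommRing A] {r : ℕ} (x : Fin r → A) (n : ℕ) :
    Submodule A (MvPolynomial (Fin r) A) :=
  (RingHom.ker (MvPolynomial.aeval (fun i => Polynomial.C (x i) * Polynomial.X) :
      MvPolynomial (Fin r) A →ₐ[A] Polynomial A)).restrictScalars A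
  ⊓ MvPolynomial.homogeneousSubmodule (Fin r) A n

/-- `E(I)_n = 0`, i.e. `L_n = V_1·L_{n-1}`: the degree-`n` equations of the Rees algebra
are generated by those of degree `n-1`. -/
def reesRelStable {A : Type*} [CommRing A] {r : ℕ} (x : Fin r → A) (n : ℕ) : Prop :=
  reesRel x n = MvPolynomial.homogeneousSubmodule (Fin r) A 1 * reesRel x (n - 1)

/-- The set `SD(I) = {1} ∪ {n ≥ 2 : L_n ≠ V_1·L_{n-1}}` of sifted degrees. -/
def siftedDegrees {A : Type*} [CommRing A] {r : ℕ} (x : Fin r → A) : Set ℕ :=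
  {1} ∪ {n : ℕ | 2 ≤ n ∧ ¬ reesRelStable x n}

/-- The sifted type `st(I) = card SD(I)`. -/
noncomputable def siftedType {A : Type*} [CommRing A] {r : ℕ} (x : Fin r → A) : ℕ :=
  (siftedDegrees x).ncard

/-- The relation type `rt(I)`: the least `s ≥ 1` with `L_n = V_1·L_{n-1}` for all
`n ≥ s+1`. -/
noncomputable def relType {A : Type*} [CommRing A] {r : ℕ} (x : Fin r → A) : ℕ :=
  sInf {s : ℕ | 1 ≤ s ∧ ∀ n, s + 1 ≤ n → reesRelStable x n}

/-- The strong Artin-Rees number `s(J,A;I)`: the least `s ≥ 1` with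
`I^n ∩ J = I·(I^{n-1} ∩ J)` for all `n ≥ s+1`. -/
noncomputable def strongAR {A : Type*} [CommRing A] (I J : Ideal A) : ℕ :=
  sInf {s : ℕ | 1 ≤ s ∧ ∀ n, s + 1 ≤ n → I ^ n ⊓ J = I * (I ^ (n - 1) ⊓ J)}

/-- The medium Artin-Rees number `m(J,A;I) = 1 + card{n ≥ 2 : E(J,A;I)_n ≠ 0}`. -/
noncomputable def mediumAR {A : Type*} [CommRing A] (I J : Ideal A) : ℕ :=
  1 + {n : ℕ | 2 ≤ n ∧ I ^ n ⊓ J ≠ I * (I ^ (n - 1) ⊓ J)}.ncard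

/-- The weak Artin-Rees number `w(J,A;I)`: the least `s ≥ 1` with
`I^n ∩ J ⊆ I^{n-s}·J` for all `n ≥ s`. -/
noncomputable def weakAR {A : Type*} [CommRing A] (I J : Ideal A) : ℕ :=
  sInf {s : ℕ | 1 ≤ s ∧ ∀ n, s ≤ n → I ^ n ⊓ J ≤ I ^ (n - s) * J}


/-!
Write `a ∈ I^n ∩ J` as `F(x)` for a form `F` of degree `n`. Modulo `J`, `F` becomes a degree-`n`
relation of `x̄`, hence by hypothesis a sum of products `v·ḡ` with `v` linear and `ḡ` a relation
of degree `n-1`. Lifting these to forms `V`, `G` over `A` gives `G(x) ∈ I^{n-1} ∩ J`, so the lift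
`∑ V·G` evaluates into `I·(I^{n-1} ∩ J)`; its difference with `F` has coefficients in `J`, so
evaluates into `J·I^n ⊆ I·(I^{n-1} ∩ J)`.

For the numerical bounds, `A/J` is noetherian, so its Rees relations are generated in bounded
degree and `L̄_n = V̄_1·L̄_{n-1}` fails in only finitely many degrees.
-/

open MvPolynomial

namespace MvPolynomial

section CommSemiring

variable {σ R S : Type*} [CommSemiring R] [CommSemiring S]

lemma aeval_C_mul_X_monomial (y : σ → R) (α : σ →₀ ℕ) (c : R) :
    aeval (fun i => Polynomial.C (y i) * Polynomial.X) (monomial α c) =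
      Polynomial.C (eval y (monomial α c)) * Polynomial.X ^ α.degree := by
  simp only [aeval_monomial, eval_monomial, Finsupp.prod, mul_pow, Finset.prod_mul_distrib,
    Finset.prod_pow_eq_pow_sum, Finsupp.degree_apply, map_mul, map_prod, map_pow,
    Polynomial.algebraMap_eq]
  ring

lemma coeff_aeval_C_mul_X (y : σ → R) (q : MvPolynomial σ R) (m : ℕ) :
    (aeval (fun i => Polynomial.C (y i) * Polynomial.X) q).coeff m =
      eval y (homogeneousComponent m q) := by
  induction q using MvPolynomial.induction_on' with
  | monomial α c =>
    rw [aeval_C_mul_X_monomial, Polynomial.coeff_C_mul_X_pow,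
      homogeneousComponent_of_mem (isHomogeneous_monomial c rfl)]
    split_ifs <;> simp_all
  | add p q hp hq => simp only [map_add, Polynomial.coeff_add, hp, hq]

lemma aeval_C_mul_X_eq_zero_iff (y : σ → R) (q : MvPolynomial σ R) :
    aeval (fun i => Polynomial.C (y i) * Polynomial.X) q = 0 ↔
      ∀ m, eval y (homogeneousComponent m q) = 0 := by
  simp only [Polynomial.ext_iff, coeff_aeval_C_mul_X, Polynomial.coeff_zero]

lemma IsHomogeneous.aeval_C_mul_X_eq_zero_iff {p : MvPolynomial σ R} {n : ℕ}
    (hp : p.IsHomogeneous n) (y : σ → R) :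
    MvPolynomial.aeval (fun i => Polynomial.C (y i) * Polynomial.X) p = 0 ↔ eval y p = 0 := by
  rw [MvPolynomial.aeval_C_mul_X_eq_zero_iff]
  refine ⟨fun h => homogeneousComponent_eq_self hp ▸ h n, fun h m => ?_⟩
  rw [homogeneousComponent_of_mem hp]
  split_ifs <;> simp [h]

lemma map_homogeneousComponent (f : R →+* S) (n : ℕ) (q : MvPolynomial σ R) :
    map f (homogeneousComponent n q) = homogeneousComponent n (map f q) := by
  ext α
  simp only [coeff_map, coeff_homogeneousComponent]
  split_ifs <;> simp

lemma exists_isHomogeneous_map_eq {f : R →+* S} (hf : Function.Surjective f) {n : ℕ}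
    {p : MvPolynomial σ S} (hp : p.IsHomogeneous n) :
    ∃ G : MvPolynomial σ R, G.IsHomogeneous n ∧ map f G = p := by
  obtain ⟨q, rfl⟩ := map_surjective f hf p
  exact ⟨homogeneousComponent n q, homogeneousComponent_isHomogeneous n q,
    by rw [map_homogeneousComponent, homogeneousComponent_eq_self hp]⟩

lemma IsHomogeneous.eval_mem_mul_span_pow {F : MvPolynomial σ R} {n : ℕ}
    (hF : F.IsHomogeneous n) (x : σ → R) {K : Ideal R} (hK : ∀ α, coeff α F ∈ K) :
    eval x F ∈ K * Ideal.span (Set.range x) ^ n := by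
  rw [F.as_sum, map_sum]
  refine Ideal.sum_mem _ fun α hα => ?_
  have hmono : eval x (monomial α (coeff α F)) = coeff α F * eval x (monomial α 1) := by
    simp only [eval_monomial, one_mul]
  rw [hmono]
  refine Ideal.mul_mem_mul (hK α) ((Ideal.mem_span_pow_iff_exists_isHomogeneous x _).2
    ⟨monomial α 1, isHomogeneous_monomial 1 ?_, rfl⟩)
  rw [Finsupp.degree_eq_weight_one]
  exact hF (mem_support_iff.1 hα)

lemma homogeneousSubmodule_succ (n : ℕ) :
    homogeneousSubmodule σ R (n + 1) =
      homogeneousSubmodule σ R 1 * homogeneousSubmodule σ R n := by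
  rw [← homogeneousSubmodule_one_pow, pow_succ', homogeneousSubmodule_one_pow]

attribute [local instance] MvPolynomial.gradedAlgebra in
lemma homogeneousComponent_mul_of_isHomogeneous {g : MvPolynomial σ R} {d n : ℕ}
    (hg : g.IsHomogeneous d) (hdn : d ≤ n) (c : MvPolynomial σ R) :
    homogeneousComponent n (c * g) = homogeneousComponent (n - d) c * g := by
  rw [← decomposition.decompose'_apply, ← decomposition.decompose'_apply]
  exact DirectSum.coe_decompose_mul_of_right_mem_of_le (homogeneousSubmodule σ R) hg hdn

end CommSemiring

end MvPolynomial

section ReesRel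

variable {R : Type*} [CommRing R] {r : ℕ} (y : Fin r → R)

lemma mem_reesRel_iff {n : ℕ} {p : MvPolynomial (Fin r) R} :
    p ∈ reesRel y n ↔ p.IsHomogeneous n ∧ eval y p = 0 := by
  rw [reesRel, Submodule.mem_inf, Submodule.restrictScalars_mem, RingHom.mem_ker,
    mem_homogeneousSubmodule, and_comm]
  exact and_congr_right fun hp => hp.aeval_C_mul_X_eq_zero_iff y

lemma homogeneousComponent_mem_reesRel {q : MvPolynomial (Fin r) R}
    (hq : aeval (fun i => Polynomial.C (y i) * Polynomial.X) q = 0) (d : ℕ) :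
    homogeneousComponent d q ∈ reesRel y d :=
  (mem_reesRel_iff y).2
    ⟨homogeneousComponent_isHomogeneous d q, (aeval_C_mul_X_eq_zero_iff y q).1 hq d⟩

lemma homogeneousSubmodule_mul_reesRel_le (d m : ℕ) :
    homogeneousSubmodule (Fin r) R d * reesRel y m ≤ reesRel y (d + m) := by
  refine Submodule.mul_le.2 fun u hu w hw => ?_
  obtain ⟨hw, hw0⟩ := (mem_reesRel_iff y).1 hw
  exact (mem_reesRel_iff y).2 ⟨IsHomogeneous.mul hu hw, by rw [map_mul, hw0, mul_zero]⟩

lemma reesRel_le_mul_of_le_span {n : ℕ} {S : Set (MvPolynomial (Fin r) R)}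
    (hS : ∀ g ∈ S, ∃ d < n, g ∈ reesRel y d) (hL : ∀ p ∈ reesRel y n, p ∈ Ideal.span S) :
    reesRel y n ≤ homogeneousSubmodule (Fin r) R 1 * reesRel y (n - 1) := by
  intro p hp
  -- Quantifying over all multiples `c * q` makes the claim stable under the ideal's scalars.
  suffices h : ∀ q ∈ Ideal.span S, ∀ c, homogeneousComponent n (c * q) ∈
      homogeneousSubmodule (Fin r) R 1 * reesRel y (n - 1) by
    simpa [homogeneousComponent_eq_self ((mem_reesRel_iff y).1 hp).1] using h p (hL p hp) 1
  intro q hq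
  induction hq using Submodule.span_induction with
  | mem g hg =>
    intro c
    obtain ⟨d, hdn, hgd⟩ := hS g hg
    have hc : homogeneousComponent (n - d) c ∈
        homogeneousSubmodule (Fin r) R 1 * homogeneousSubmodule (Fin r) R (n - 1 - d) := by
      rw [← homogeneousSubmodule_succ, show n - 1 - d + 1 = n - d by omega]
      exact homogeneousComponent_isHomogeneous _ _
    have hV : homogeneousSubmodule (Fin r) R (n - 1 - d) * reesRel y d ≤ reesRel y (n - 1) := by
      simpa [show n - 1 - d + d = n - 1 by omega] using
        homogeneousSubmodule_mul_reesRel_le y (n - 1 - d) d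
    rw [homogeneousComponent_mul_of_isHomogeneous ((mem_reesRel_iff y).1 hgd).1 hdn.le]
    have := Submodule.mul_mem_mul hc hgd
    rw [mul_assoc] at this
    exact mul_le_mul_right hV _ this
  | zero => simp
  | add q₁ q₂ _ _ h₁ h₂ =>
    exact fun c => by simpa only [mul_add, map_add] using add_mem (h₁ c) (h₂ c)
  | smul a q _ h => exact fun c => by simpa only [smul_eq_mul, ← mul_assoc] using h (c * a)

lemma exists_forall_reesRelStable [IsNoetherianRing R] :
    ∃ N, 1 ≤ N ∧ ∀ n, N + 1 ≤ n → reesRelStable y n := by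
  obtain ⟨T, hT⟩ := (isNoetherianRing_iff_ideal_fg _).1 inferInstance
    (RingHom.ker (aeval (fun i => Polynomial.C (y i) * Polynomial.X) :
      MvPolynomial (Fin r) R →ₐ[R] Polynomial R))
  have hker : ∀ t ∈ T, aeval (fun i => Polynomial.C (y i) * Polynomial.X) t = 0 :=
    fun t ht => RingHom.mem_ker.1 (hT ▸ Ideal.subset_span ht)
  let S := {g | ∃ t ∈ T, ∃ d ≤ t.totalDegree, g = homogeneousComponent d t}
  have hTS : Ideal.span (T : Set (MvPolynomial (Fin r) R)) ≤ Ideal.span S := by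
    refine Ideal.span_le.2 fun t ht => ?_
    rw [SetLike.mem_coe, ← sum_homogeneousComponent t]
    exact Ideal.sum_mem _ fun d hd =>
      Ideal.subset_span ⟨t, ht, d, Nat.lt_succ_iff.1 (Finset.mem_range.1 hd), rfl⟩
  refine ⟨T.sup totalDegree + 1, by omega, fun n hn => le_antisymm ?_ ?_⟩
  · refine reesRel_le_mul_of_le_span y ?_ fun p hp => hTS (hT ▸ ?_)
    · rintro _ ⟨t, ht, d, hd, rfl⟩
      exact ⟨d, by have := Finset.le_sup (f := totalDegree) ht; omega,
        homogeneousComponent_mem_reesRel y (hker t ht) d⟩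
    · obtain ⟨hp, hp0⟩ := (mem_reesRel_iff y).1 hp
      exact RingHom.mem_ker.2 ((hp.aeval_C_mul_X_eq_zero_iff y).2 hp0)
  · simpa [show 1 + (n - 1) = n by omega] using homogeneousSubmodule_mul_reesRel_le y 1 (n - 1)

lemma relType_spec [IsNoetherianRing R] :
    1 ≤ relType y ∧ ∀ n, relType y + 1 ≤ n → reesRelStable y n :=
  Nat.sInf_mem (exists_forall_reesRelStable y)

lemma finite_setOf_not_reesRelStable [IsNoetherianRing R] :
    {n | 2 ≤ n ∧ ¬ reesRelStable y n}.Finite := by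
  refine (Set.finite_Iic (relType y)).subset fun n hn => by_contra fun hlt => hn.2 ?_
  exact (relType_spec y).2 n (by simpa using hlt)

lemma siftedType_eq [IsNoetherianRing R] :
    siftedType y = 1 + {n | 2 ≤ n ∧ ¬ reesRelStable y n}.ncard := by
  rw [siftedType, siftedDegrees, Set.ncard_union_eq _ (Set.finite_singleton 1)
    (finite_setOf_not_reesRelStable y), Set.ncard_singleton]
  simp

end ReesRel

section ArtinRees

variable {A : Type*} [CommRing A] {r : ℕ} (x : Fin r → A) (J : Ideal A)

local notation "I" => Ideal.span (Set.range x)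

local notation "x̄" => fun i => Ideal.Quotient.mk J (x i)

lemma eval_map_quotient_mk (G : MvPolynomial (Fin r) A) :
    eval x̄ (map (Ideal.Quotient.mk J) G) = Ideal.Quotient.mk J (eval x G) :=
  (map_eval _ _ _).symm

lemma exists_lift_of_mem_mul_reesRel {n : ℕ} (hn : 1 ≤ n) {p : MvPolynomial (Fin r) (A ⧸ J)}
    (hp : p ∈ homogeneousSubmodule (Fin r) (A ⧸ J) 1 * reesRel x̄ (n - 1)) :
    ∃ G : MvPolynomial (Fin r) A, G.IsHomogeneous n ∧ map (Ideal.Quotient.mk J) G = p ∧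
      eval x G ∈ I * (I ^ (n - 1) ⊓ J) := by
  refine Submodule.mul_induction_on hp (fun v hv g hg => ?_) fun p q hp hq => ?_
  · obtain ⟨V, hV, rfl⟩ := exists_isHomogeneous_map_eq Ideal.Quotient.mk_surjective hv
    obtain ⟨hg, hg0⟩ := (mem_reesRel_iff x̄).1 hg
    obtain ⟨G, hG, rfl⟩ := exists_isHomogeneous_map_eq Ideal.Quotient.mk_surjective hg
    have hGJ : eval x G ∈ J := by
      rwa [← Ideal.Quotient.eq_zero_iff_mem, ← eval_map_quotient_mk]
    refine ⟨V * G, by simpa [show 1 + (n - 1) = n by omega] using hV.mul hG, map_mul _ _ _, ?_⟩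
    rw [map_mul]
    refine Ideal.mul_mem_mul ?_ ⟨?_, hGJ⟩
    · simpa using (Ideal.mem_span_pow_iff_exists_isHomogeneous x _).2 ⟨V, hV, rfl⟩
    · exact (Ideal.mem_span_pow_iff_exists_isHomogeneous x _).2 ⟨G, hG, rfl⟩
  · obtain ⟨G₁, h₁, rfl, e₁⟩ := hp
    obtain ⟨G₂, h₂, rfl, e₂⟩ := hq
    exact ⟨G₁ + G₂, h₁.add h₂, map_add _ _ _, by rw [map_add]; exact add_mem e₁ e₂⟩

theorem pow_inf_eq_mul_pow_inf_of_reesRelStable {n : ℕ} (hn : 1 ≤ n)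
    (h : reesRelStable x̄ n) : I ^ n ⊓ J = I * (I ^ (n - 1) ⊓ J) := by
  have hIn : I ^ n = I * I ^ (n - 1) := by rw [← pow_succ', Nat.sub_add_cancel hn]
  refine le_antisymm ?_ (le_inf ?_ (Ideal.mul_le_right.trans inf_le_right))
  · rintro a ⟨ha, haJ⟩
    obtain ⟨F, hF, rfl⟩ := (Ideal.mem_span_pow_iff_exists_isHomogeneous x a).1 ha
    have hF' : map (Ideal.Quotient.mk J) F ∈ reesRel x̄ n := by
      refine (mem_reesRel_iff x̄).2 ⟨hF.map _, ?_⟩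
      rwa [eval_map_quotient_mk, Ideal.Quotient.eq_zero_iff_mem]
    obtain ⟨G, hG, hGF, hGmem⟩ := exists_lift_of_mem_mul_reesRel x J hn (h ▸ hF')
    have hFG : eval x (F - G) ∈ J * I ^ n := by
      refine (hF.sub hG).eval_mem_mul_span_pow x fun α => ?_
      rw [← Ideal.Quotient.eq_zero_iff_mem, ← coeff_map, map_sub, hGF, sub_self, coeff_zero]
    have hJI : J * I ^ n ≤ I * (I ^ (n - 1) ⊓ J) := by
      rw [hIn, mul_left_comm]
      exact Ideal.mul_mono_right (le_inf Ideal.mul_le_right Ideal.mul_le_left)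
    simpa using add_mem hGmem (hJI hFG)
  · exact hIn ▸ Ideal.mul_mono_right inf_le_left

end ArtinRees

section ArtinReesNumbers

variable {A : Type*} [CommRing A] [IsNoetherianRing A] {r : ℕ} (x : Fin r → A) (J : Ideal A)

theorem strongAR_le_relType :
    strongAR (Ideal.span (Set.range x)) J ≤ relType (fun i => Ideal.Quotient.mk J (x i)) := by
  obtain ⟨h1, hstable⟩ := relType_spec (fun i => Ideal.Quotient.mk J (x i))
  exact Nat.sInf_le ⟨h1, fun n hn =>
    pow_inf_eq_mul_pow_inf_of_reesRelStable x J (by omega) (hstable n hn)⟩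

theorem mediumAR_le_siftedType :
    mediumAR (Ideal.span (Set.range x)) J ≤ siftedType (fun i => Ideal.Quotient.mk J (x i)) := by
  rw [mediumAR, siftedType_eq]
  refine Nat.add_le_add_left (Set.ncard_le_ncard ?_ (finite_setOf_not_reesRelStable _)) 1
  rintro n ⟨hn, hne⟩
  exact ⟨hn, fun hs => hne (pow_inf_eq_mul_pow_inf_of_reesRelStable x J (by omega) hs)⟩

end ArtinReesNumbers

/-- For every `n ≥ 2`: if `L̄_n = V̄_1·L̄_{n-1}` (i.e. `E(I;A/J)_n = 0`) then
`I^n ∩ J = I·(I^{n-1} ∩ J)` (i.e. `E(J,A;I)_n = 0`); consequently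
`s(J,A;I) ≤ rt(I;A/J)` and `m(J,A;I) ≤ st(I;A/J)`. -/
theorem stmt_5 {A : Type*} [CommRing A] [IsNoetherianRing A] {r : ℕ}
    (x : Fin r → A) (J : Ideal A) :
    (∀ n, 2 ≤ n → reesRelStable (fun i => Ideal.Quotient.mk J (x i)) n →
      (Ideal.span (Set.range x)) ^ n ⊓ J =
        Ideal.span (Set.range x) * ((Ideal.span (Set.range x)) ^ (n - 1) ⊓ J)) ∧
    strongAR (Ideal.span (Set.range x)) J ≤
      relType (fun i => Ideal.Quotient.mk J (x i)) ∧
    mediumAR (Ideal.span (Set.range x)) J ≤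
      siftedType (fun i => Ideal.Quotient.mk J (x i)) :=
  ⟨fun _ hn => pow_inf_eq_mul_pow_inf_of_reesRelStable x J (by omega),
    strongAR_le_relType x J, mediumAR_le_siftedType x J⟩
end

section
/- Let I and J be ideals of A with J ⊆ I. If I^n ∩ J ⊆ I^{n-1}·J for all n ≥ 1, then I^n ∩ J = I·(I^{n-1} ∩ J) for all n ≥ 2; consequently the medium and strong Artin-Rees numbers satisfy m(J,A;I) = s(J,A;I) = 1. -/
/-! Since `J ⊆ I`, we have `I^{n-2}·J ⊆ I^{n-1} ∩ J`, so the hypothesis gives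
`I^n ∩ J ⊆ I^{n-1}·J = I·(I^{n-2}·J) ⊆ I·(I^{n-1} ∩ J)`; the reverse inclusion always holds.
Hence every Artin-Rees module `E_n` with `n ≥ 2` vanishes. -/

namespace Ideal

variable {A : Type*} [CommRing A] (I J : Ideal A)

theorem mul_pow_inf_le_pow_succ_inf (n : ℕ) : I * (I ^ n ⊓ J) ≤ I ^ (n + 1) ⊓ J :=
  le_inf ((mul_mono_right inf_le_left).trans_eq (pow_succ' I n).symm)
    (mul_le_right.trans inf_le_right)

variable {I J}

theorem pow_succ_mul_le_mul_pow_succ_inf (hJI : J ≤ I) (m : ℕ) :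
    I ^ (m + 1) * J ≤ I * (I ^ (m + 1) ⊓ J) := by
  calc I ^ (m + 1) * J = I * (I ^ m * J) := by rw [pow_succ', mul_assoc]
    _ ≤ I * (I ^ (m + 1) ⊓ J) :=
      mul_mono_right (le_inf ((mul_mono_right hJI).trans_eq (pow_succ I m).symm) mul_le_right)

theorem pow_add_two_inf_eq_mul_of_le (hJI : J ≤ I) {m : ℕ}
    (h : I ^ (m + 2) ⊓ J ≤ I ^ (m + 1) * J) :
    I ^ (m + 2) ⊓ J = I * (I ^ (m + 1) ⊓ J) :=
  le_antisymm (h.trans (pow_succ_mul_le_mul_pow_succ_inf hJI m))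
    (mul_pow_inf_le_pow_succ_inf I J (m + 1))

end Ideal

section ArtinReesNumbers

variable {A : Type*} [CommRing A] {I J : Ideal A}

theorem mediumAR_eq_one_of_forall (h : ∀ n, 2 ≤ n → I ^ n ⊓ J = I * (I ^ (n - 1) ⊓ J)) :
    mediumAR I J = 1 := by
  have hempty : {n : ℕ | 2 ≤ n ∧ I ^ n ⊓ J ≠ I * (I ^ (n - 1) ⊓ J)} = ∅ :=
    Set.eq_empty_of_forall_notMem fun n ⟨hn, hne⟩ => hne (h n hn)
  rw [mediumAR, hempty, Set.ncard_empty]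

theorem strongAR_eq_one_of_forall (h : ∀ n, 2 ≤ n → I ^ n ⊓ J = I * (I ^ (n - 1) ⊓ J)) :
    strongAR I J = 1 := by
  have hone : 1 ∈ {s : ℕ | 1 ≤ s ∧ ∀ n, s + 1 ≤ n → I ^ n ⊓ J = I * (I ^ (n - 1) ⊓ J)} :=
    ⟨le_rfl, h⟩
  exact le_antisymm (Nat.sInf_le hone) (le_csInf ⟨1, hone⟩ fun s hs => hs.1)

end ArtinReesNumbers

theorem stmt_8_general {A : Type*} [CommRing A] (I J : Ideal A)
    (hJI : J ≤ I) (h : ∀ n, 1 ≤ n → I ^ n ⊓ J ≤ I ^ (n - 1) * J) :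
    (∀ n, 2 ≤ n → I ^ n ⊓ J = I * (I ^ (n - 1) ⊓ J)) ∧
    mediumAR I J = 1 ∧ strongAR I J = 1 := by
  have hstable : ∀ n, 2 ≤ n → I ^ n ⊓ J = I * (I ^ (n - 1) ⊓ J) := by
    intro n hn
    obtain ⟨m, rfl⟩ : ∃ m, n = m + 2 := ⟨n - 2, by omega⟩
    exact Ideal.pow_add_two_inf_eq_mul_of_le hJI (h (m + 2) (by omega))
  exact ⟨hstable, mediumAR_eq_one_of_forall hstable, strongAR_eq_one_of_forall hstable⟩

/-- If `J ⊆ I` and `I^n ∩ J ⊆ I^{n-1}·J` for all `n ≥ 1`, then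
`I^n ∩ J = I·(I^{n-1} ∩ J)` for all `n ≥ 2`; consequently `m(J,A;I) = s(J,A;I) = 1`. -/
theorem stmt_8 {A : Type*} [CommRing A] [IsNoetherianRing A] (I J : Ideal A)
    (hJI : J ≤ I) (h : ∀ n, 1 ≤ n → I ^ n ⊓ J ≤ I ^ (n - 1) * J) :
    (∀ n, 2 ≤ n → I ^ n ⊓ J = I * (I ^ (n - 1) ⊓ J)) ∧
    mediumAR I J = 1 ∧ strongAR I J = 1 :=
  stmt_8_general I J hJI h
end

section
/- Let k be a field, A = k[a_1,a_2] the polynomial ring, p ≥ 2, x_1 = a_1^p, x_2 = a_2^p, y = a_1 a_2^{p-1}. Let φ : A[X_1,X_2,Y] → A[t] be the A-algebra map sending X_1 ↦ x_1 t, X_2 ↦ x_2 t, Y ↦ y t. Then ker φ is the ideal of A[X_1,X_2,Y] generated by the polynomials F_1 = a_1^{p-1}Y − a_2^{p-1}X_1, G_1 = a_2 Y − a_1 X_2, and F_n = a_1^{p-n}Y^n − a_2^{p-n}X_1 X_2^{n-1} for 2 ≤ n ≤ p. -/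
/-!
The map `φ` sends the monomial `a₁ᵘ a₂ᵛ X₁ⁱ X₂ʲ Yˡ` to the monomial `a₁^α a₂^β tᴺ` whose exponent
triple (the weight) depends linearly on `(u, v, i, j, l)`. Distinct monomials of `A[t]` are
linearly independent over `k`, so `ker φ` is spanned over `k` by the differences of monomials of
equal weight, and it suffices that any two monomials of equal weight are congruent modulo the
ideal `J` generated by `G₁` and the `Fₙ`. Rewriting with `G₁`, the `Fₙ` and `K = a₂ᵖX₁ - a₁ᵖX₂ ∈ J`
strictly lowers `2 l + i`, so every monomial is congruent to a normal form of the same weight;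
and a normal form is determined by its weight.
-/

theorem LinearMap.ker_le_of_sub_mem {K V W ι κ : Type*} [Ring K] [AddCommGroup V] [Module K V]
    [AddCommGroup W] [Module K W] (f : V →ₗ[K] W) {b : ι → V}
    (hb : Submodule.span K (Set.range b) = ⊤) {e : κ → W} (he : LinearIndependent K e)
    {w : ι → κ} (hfb : ∀ i, f (b i) = e (w i)) {P : Submodule K V}
    (hP : ∀ i i', w i = w i' → b i - b i' ∈ P) : LinearMap.ker f ≤ P := by
  have hfactor : Function.FactorsThrough (P.mkQ ∘ b) w := fun i i' h =>
    (Submodule.Quotient.eq P).mpr (hP i i' h)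
  have hrange : LinearMap.range f ≤ Submodule.span K (Set.range e) := by
    rw [LinearMap.range_eq_map, ← hb, Submodule.map_span, Submodule.span_le]
    rintro _ ⟨_, ⟨i, rfl⟩, rfl⟩
    exact Submodule.subset_span ⟨w i, (hfb i).symm⟩
  set f' := f.codRestrict _ fun x => hrange (LinearMap.mem_range_self f x)
  -- `ψ` sends `e (w i)` to the class of `b i`; this is well defined by `hP`
  set ψ := Finsupp.linearCombination K (Function.extend w (P.mkQ ∘ b) 0) ∘ₗ he.repr
  have hψ : ψ ∘ₗ f' = P.mkQ := LinearMap.ext_on_range hb fun i => by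
    have hrepr : he.repr (f' (b i)) = Finsupp.single (w i) 1 := he.repr_eq_single _ _ (hfb i)
    simp [ψ, hrepr, hfactor.extend_apply]
  intro x hx
  have hx' : f' x = 0 := Subtype.ext hx
  rw [← Submodule.Quotient.mk_eq_zero, ← P.mkQ_apply, ← hψ, LinearMap.comp_apply, hx', map_zero]

namespace ReesEquations

open MvPolynomial

variable {k : Type*} [Field k]

local notation "A" => MvPolynomial (Fin 2) k
local notation "R" => MvPolynomial (Fin 3) A

noncomputable def reesMap (p : ℕ) : R →ₐ[A] Polynomial A :=
  aeval ![Polynomial.C (X 0 ^ p) * Polynomial.X, Polynomial.C (X 1 ^ p) * Polynomial.X,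
    Polynomial.C (X 0 * X 1 ^ (p - 1)) * Polynomial.X]

noncomputable def reesGenerators (p : ℕ) : Set R :=
  {C ((X 0 : A) ^ (p - 1)) * X 2 - C ((X 1 : A) ^ (p - 1)) * X 0,
    C (X 1 : A) * X 2 - C (X 0 : A) * X 1} ∪
  (fun n => C ((X 0 : A) ^ (p - n)) * X 2 ^ n - C ((X 1 : A) ^ (p - n)) * (X 0 * X 1 ^ (n - 1))) ''
    Set.Icc 2 p

/-- `monomialOf (u, v, i, j, l) = a₁ᵘ a₂ᵛ X₁ⁱ X₂ʲ Yˡ`. -/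
noncomputable def monomialOf : ℕ × ℕ × ℕ × ℕ × ℕ → R
  | (u, v, i, j, l) => C (X 0 ^ u * X 1 ^ v) * X 0 ^ i * X 1 ^ j * X 2 ^ l

noncomputable def targetMonomial : ℕ × ℕ × ℕ → Polynomial A
  | (a, b, n) => Polynomial.C (X 0 ^ a * X 1 ^ b) * Polynomial.X ^ n

def weight (p : ℕ) : ℕ × ℕ × ℕ × ℕ × ℕ → ℕ × ℕ × ℕ
  | (u, v, i, j, l) => (u + p * i + l, v + p * j + (p - 1) * l, i + j + l)

theorem monomialOf_add (e e' : ℕ × ℕ × ℕ × ℕ × ℕ) :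
    monomialOf (k := k) (e + e') = monomialOf e * monomialOf e' := by
  obtain ⟨u, v, i, j, l⟩ := e
  obtain ⟨u', v', i', j', l'⟩ := e'
  simp only [monomialOf, pow_add, map_mul]
  ring

theorem weight_add (p : ℕ) (e e' : ℕ × ℕ × ℕ × ℕ × ℕ) :
    weight p (e + e') = weight p e + weight p e' := by
  obtain ⟨u, v, i, j, l⟩ := e
  obtain ⟨u', v', i', j', l'⟩ := e'
  simp only [weight, Prod.mk_add_mk, Prod.mk.injEq]
  refine ⟨?_, ?_, ?_⟩ <;> ring

theorem reesMap_monomialOf (p : ℕ) (e : ℕ × ℕ × ℕ × ℕ × ℕ) :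
    reesMap (k := k) p (monomialOf e) = targetMonomial (weight p e) := by
  obtain ⟨u, v, i, j, l⟩ := e
  simp only [reesMap, monomialOf, targetMonomial, weight, map_mul, map_pow, aeval_X, aeval_C,
    Polynomial.algebraMap_eq, Matrix.cons_val_zero, Matrix.cons_val_one, Matrix.cons_val_two,
    Matrix.head_cons, Matrix.tail_cons, mul_pow, pow_add, pow_mul]
  ring

theorem linearIndependent_targetMonomial : LinearIndependent k (targetMonomial (k := k)) := by
  let basis := (basisMonomials (Fin 2) k).smulTower (Polynomial.basisMonomials A)
  let index : ℕ × ℕ × ℕ → (Fin 2 →₀ ℕ) × ℕ := fun t =>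
    (Finsupp.single 0 t.1 + Finsupp.single 1 t.2.1, t.2.2)
  have hindex : index.Injective := by
    rintro ⟨a, b, n⟩ ⟨a', b', n'⟩ h
    obtain ⟨hab, rfl⟩ := Prod.mk.inj h
    have h0 := DFunLike.congr_fun hab 0
    have h1 := DFunLike.congr_fun hab 1
    simp only [Finsupp.coe_add, Pi.add_apply, Finsupp.single_eq_same, ne_eq, zero_ne_one,
      not_false_eq_true, Finsupp.single_eq_of_ne, add_zero, one_ne_zero, zero_add] at h0 h1
    simp [h0, h1]
  have htarget : targetMonomial = basis ∘ index := by
    ext1 ⟨a, b, n⟩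
    simp [basis, index, targetMonomial, Module.Basis.smulTower_apply, Polynomial.smul_eq_C_mul,
      X_pow_eq_monomial, monomial_mul, Polynomial.X_pow_eq_monomial]
  rw [htarget]
  exact basis.linearIndependent.comp index hindex

theorem span_range_monomialOf : Submodule.span k (Set.range (monomialOf (k := k))) = ⊤ := by
  let basis := (basisMonomials (Fin 2) k).smulTower (basisMonomials (Fin 3) A)
  refine eq_top_mono (Submodule.span_mono ?_) basis.span_eq
  rintro _ ⟨⟨α, β⟩, rfl⟩
  refine ⟨(α 0, α 1, β 0, β 1, β 2), ?_⟩
  simp [basis, monomialOf, Module.Basis.smulTower_apply, smul_eq_C_mul, monomial_eq,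
    Finsupp.prod_fintype, Fin.prod_univ_succ, mul_assoc]

variable (k) in
noncomputable def F (p n : ℕ) : R :=
  monomialOf (p - n, 0, 0, 0, n) - monomialOf (0, p - n, 1, n - 1, 0)

variable (k) in
noncomputable def G : R := monomialOf (0, 1, 0, 0, 1) - monomialOf (1, 0, 0, 1, 0)

theorem reesGenerators_eq {p : ℕ} (hp : 1 ≤ p) :
    reesGenerators (k := k) p = insert (G k) (F k p '' Set.Icc 1 p) := by
  have hF : ∀ n,
      C ((X 0 : A) ^ (p - n)) * X 2 ^ n - C ((X 1 : A) ^ (p - n)) * (X 0 * X 1 ^ (n - 1)) =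
        F k p n := by
    intro n
    simp [F, monomialOf, mul_assoc]
  have hF₁ : C ((X 0 : A) ^ (p - 1)) * X 2 - C ((X 1 : A) ^ (p - 1)) * X 0 = F k p 1 := by
    simpa using hF 1
  have hG : C (X 1 : A) * X 2 - C (X 0 : A) * X 1 = G k := by
    simp [G, monomialOf]
  ext x
  simp only [reesGenerators, hF, hF₁, hG, Set.mem_union, Set.mem_insert_iff, Set.mem_singleton_iff,
    Set.mem_image, Set.mem_Icc]
  constructor
  · rintro ((rfl | rfl) | ⟨n, hn, rfl⟩)
    · exact Or.inr ⟨1, ⟨le_rfl, hp⟩, rfl⟩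
    · exact Or.inl rfl
    · exact Or.inr ⟨n, ⟨by omega, hn.2⟩, rfl⟩
  · rintro (rfl | ⟨n, hn, rfl⟩)
    · exact Or.inl (Or.inr rfl)
    · rcases hn.1.eq_or_lt with rfl | h
      · exact Or.inl (Or.inl rfl)
      · exact Or.inr ⟨n, ⟨h, hn.2⟩, rfl⟩

variable (k) in
def Congruent (p : ℕ) (e e' : ℕ × ℕ × ℕ × ℕ × ℕ) : Prop :=
  weight p e = weight p e' ∧
    Ideal.Quotient.mk (Ideal.span (reesGenerators p)) (monomialOf (k := k) e) =
      Ideal.Quotient.mk _ (monomialOf e')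

namespace Congruent

variable {p : ℕ} {a b e : ℕ × ℕ × ℕ × ℕ × ℕ}

theorem refl (e : ℕ × ℕ × ℕ × ℕ × ℕ) : Congruent k p e e := ⟨rfl, rfl⟩

theorem symm (h : Congruent k p a b) : Congruent k p b a := ⟨h.1.symm, h.2.symm⟩

theorem trans (h : Congruent k p a b) (h' : Congruent k p b e) : Congruent k p a e :=
  ⟨h.1.trans h'.1, h.2.trans h'.2⟩

theorem add_left (h : Congruent k p a b) (c : ℕ × ℕ × ℕ × ℕ × ℕ) :
    Congruent k p (c + a) (c + b) := by
  refine ⟨by rw [weight_add, weight_add, h.1], ?_⟩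
  rw [monomialOf_add, monomialOf_add, map_mul, map_mul, h.2]

theorem reesMap_eq (h : Congruent k p a b) :
    reesMap p (monomialOf (k := k) a) = reesMap p (monomialOf b) := by
  rw [reesMap_monomialOf, reesMap_monomialOf, h.1]

end Congruent

theorem congruent_G {p : ℕ} (hp : 1 ≤ p) : Congruent k p (0, 1, 0, 0, 1) (1, 0, 0, 1, 0) := by
  refine ⟨?_, Ideal.Quotient.eq.mpr (Ideal.subset_span ?_)⟩
  · simp only [weight, Prod.mk.injEq, mul_zero, mul_one, add_zero, zero_add, and_true, true_and]
    omega
  · rw [reesGenerators_eq hp]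
    exact Set.mem_insert _ _

theorem congruent_F {p n : ℕ} (hn : 1 ≤ n) (hnp : n ≤ p) :
    Congruent k p (p - n, 0, 0, 0, n) (0, p - n, 1, n - 1, 0) := by
  refine ⟨?_, Ideal.Quotient.eq.mpr (Ideal.subset_span ?_)⟩
  · simp only [weight, Prod.mk.injEq]
    refine ⟨by omega, ?_, by omega⟩
    zify [hn, hnp, hn.trans hnp]
    ring
  · rw [reesGenerators_eq (hn.trans hnp)]
    exact Set.mem_insert_of_mem _ ⟨n, ⟨hn, hnp⟩, rfl⟩

-- `a₂ᵖ X₁ ≡ a₂ a₁ᵖ⁻¹ Y ≡ a₁ᵖ X₂` by `F₁` and then `G₁`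
theorem congruent_K {p : ℕ} (hp : 1 ≤ p) : Congruent k p (0, p, 1, 0, 0) (p, 0, 0, 1, 0) := by
  have h₁ : Congruent k p (0, p, 1, 0, 0) (p - 1, 1, 0, 0, 1) := by
    convert (congruent_F le_rfl hp).symm.add_left (0, 1, 0, 0, 0) using 1 <;>
      simp only [Prod.mk_add_mk, Prod.mk.injEq, and_true, true_and] <;> omega
  have h₂ : Congruent k p (p - 1, 1, 0, 0, 1) (p, 0, 0, 1, 0) := by
    convert (congruent_G hp).add_left (p - 1, 0, 0, 0, 0) using 1 <;>
      simp only [Prod.mk_add_mk, Prod.mk.injEq, and_true] <;> omega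
  exact h₁.trans h₂

-- the exponents of the monomials to which none of `G₁`, `Fₙ`, `K` applies
def IsNormal (p : ℕ) : ℕ × ℕ × ℕ × ℕ × ℕ → Prop
  | (u, v, i, _, l) => l = 0 ∧ (i = 0 ∨ v < p) ∨ 0 < l ∧ v = 0 ∧ u + l < p

def rank : ℕ × ℕ × ℕ × ℕ × ℕ → ℕ
  | (_, _, i, _, l) => 2 * l + i

-- `G₁` lowers `l`, `Fₙ` trades `n ≥ 1` factors `Y` for one `X₁`, and `K` lowers `i`
theorem exists_congruent_rank_lt {p : ℕ} (hp : 1 ≤ p) {e : ℕ × ℕ × ℕ × ℕ × ℕ}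
    (he : ¬ IsNormal p e) : ∃ e', Congruent k p e e' ∧ rank e' < rank e := by
  obtain ⟨u, v, i, j, l⟩ := e
  simp only [IsNormal, not_or, not_and, not_lt] at he
  rcases Nat.eq_zero_or_pos l with rfl | hl
  · obtain ⟨hi, hv⟩ := he.1 rfl
    refine ⟨(u + p, v - p, i - 1, j + 1, 0), ?_, ?_⟩
    · convert (congruent_K hp).add_left (u, v - p, i - 1, j, 0) using 1 <;>
        simp only [Prod.mk_add_mk, Prod.mk.injEq, and_true, true_and] <;> omega
    · simp only [rank]
      omega
  rcases Nat.eq_zero_or_pos v with rfl | hv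
  · have hu := he.2 hl rfl
    refine ⟨(u - (p - min l p), p - min l p, i + 1, j + (min l p - 1), l - min l p), ?_, ?_⟩
    · convert (congruent_F (k := k) (n := min l p) (by omega) (min_le_right _ _)).add_left
        (u - (p - min l p), 0, i, j, l - min l p) using 1 <;>
        simp only [Prod.mk_add_mk, Prod.mk.injEq, true_and] <;> omega
    · simp only [rank]
      omega
  · refine ⟨(u + 1, v - 1, i, j + 1, l - 1), ?_, ?_⟩
    · convert (congruent_G hp).add_left (u, v - 1, i, j, l - 1) using 1 <;>
        simp only [Prod.mk_add_mk, Prod.mk.injEq, true_and] <;> omega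
    · simp only [rank]
      omega

theorem exists_isNormal_congruent {p : ℕ} (hp : 1 ≤ p) (e : ℕ × ℕ × ℕ × ℕ × ℕ) :
    ∃ e', IsNormal p e' ∧ Congruent k p e e' := by
  induction e using (measure rank).wf.induction with
  | _ e ih =>
    by_cases he : IsNormal p e
    · exact ⟨e, he, .refl e⟩
    · obtain ⟨e₁, he₁, hlt⟩ := exists_congruent_rank_lt (k := k) hp he
      obtain ⟨e', he', he₁'⟩ := ih e₁ hlt
      exact ⟨e', he', he₁.trans he₁'⟩

theorem IsNormal.eq_of_weight_eq {p : ℕ} (hp : 1 ≤ p) {e e' : ℕ × ℕ × ℕ × ℕ × ℕ}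
    (he : IsNormal p e) (he' : IsNormal p e') (hw : weight p e = weight p e') : e = e' := by
  wlog hi : e.2.2.1 ≤ e'.2.2.1 generalizing e e'
  · exact (this he' he hw.symm (by omega)).symm
  obtain ⟨u, v, i, j, l⟩ := e
  obtain ⟨u', v', i', j', l'⟩ := e'
  dsimp only at hi
  simp only [weight, Prod.mk.injEq] at hw
  obtain ⟨hA, hB, hN⟩ := hw
  -- `v - l - p i` is determined by the weight
  have hD : v + p * i' + l' = v' + p * i + l := by
    zify [hp] at hB hN ⊢
    linear_combination hB - p * hN
  simp only [IsNormal] at he he'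
  rcases hi.eq_or_lt with rfl | hlt
  · simp only [Prod.mk.injEq, true_and]
    omega
  · have hpi : p * i + p ≤ p * i' := Nat.mul_le_mul_left p hlt
    omega

theorem congruent_of_weight_eq {p : ℕ} (hp : 1 ≤ p) {e e' : ℕ × ℕ × ℕ × ℕ × ℕ}
    (h : weight p e = weight p e') : Congruent k p e e' := by
  obtain ⟨n, hn, hen⟩ := exists_isNormal_congruent (k := k) hp e
  obtain ⟨n', hn', hen'⟩ := exists_isNormal_congruent (k := k) hp e'
  obtain rfl : n = n' := hn.eq_of_weight_eq hp hn' (hen.1.symm.trans (h.trans hen'.1))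
  exact hen.trans hen'.symm

theorem ker_reesMap {p : ℕ} (hp : 1 ≤ p) :
    RingHom.ker (reesMap (k := k) p) = Ideal.span (reesGenerators p) := by
  refine le_antisymm (fun x hx => ?_) ?_
  · exact LinearMap.ker_le_of_sub_mem ((reesMap p).toLinearMap.restrictScalars k)
      span_range_monomialOf linearIndependent_targetMonomial (reesMap_monomialOf p)
      (P := (Ideal.span (reesGenerators p)).restrictScalars k)
      (fun e e' h => Ideal.Quotient.eq.mp (congruent_of_weight_eq hp h).2) hx
  · rw [Ideal.span_le, reesGenerators_eq hp]
    rintro _ (rfl | ⟨n, ⟨hn, hnp⟩, rfl⟩) <;> rw [SetLike.mem_coe, RingHom.mem_ker]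
    · rw [G, map_sub, sub_eq_zero]
      exact (congruent_G hp).reesMap_eq
    · rw [F, map_sub, sub_eq_zero]
      exact (congruent_F hn hnp).reesMap_eq

end ReesEquations

/-- For `A = k[a₁,a₂]`, `p ≥ 2`, `x₁ = a₁^p`, `x₂ = a₂^p`,
`y = a₁a₂^{p-1}`, the kernel of `φ : A[X₁,X₂,Y] → A[t]`, `X₁ ↦ x₁t, X₂ ↦ x₂t, Y ↦ yt`,
is generated by `F₁ = a₁^{p-1}Y − a₂^{p-1}X₁`, `G₁ = a₂Y − a₁X₂`, and
`Fₙ = a₁^{p-n}Yⁿ − a₂^{p-n}X₁X₂^{n-1}` for `2 ≤ n ≤ p`.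
(Here `X₁ = X 0`, `X₂ = X 1`, `Y = X 2`.) -/
theorem stmt_10 {k : Type*} [Field k] (p : ℕ) (hp : 2 ≤ p) :
    let a₁ : MvPolynomial (Fin 2) k := MvPolynomial.X 0
    let a₂ : MvPolynomial (Fin 2) k := MvPolynomial.X 1
    let φ : MvPolynomial (Fin 3) (MvPolynomial (Fin 2) k) →ₐ[MvPolynomial (Fin 2) k]
        Polynomial (MvPolynomial (Fin 2) k) :=
      MvPolynomial.aeval ![Polynomial.C (a₁ ^ p) * Polynomial.X,
        Polynomial.C (a₂ ^ p) * Polynomial.X,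
        Polynomial.C (a₁ * a₂ ^ (p - 1)) * Polynomial.X]
    RingHom.ker φ = Ideal.span
      ({MvPolynomial.C (a₁ ^ (p - 1)) * MvPolynomial.X 2
          - MvPolynomial.C (a₂ ^ (p - 1)) * MvPolynomial.X 0,
        MvPolynomial.C a₂ * MvPolynomial.X 2 - MvPolynomial.C a₁ * MvPolynomial.X 1} ∪
        (fun n => MvPolynomial.C (a₁ ^ (p - n)) * MvPolynomial.X 2 ^ n
          - MvPolynomial.C (a₂ ^ (p - n))
            * (MvPolynomial.X 0 * MvPolynomial.X 1 ^ (n - 1))) '' Set.Icc 2 p) :=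
  ReesEquations.ker_reesMap (by omega)
end

section
/- Let k be a field, A = k[a_1,a_2,a_3], p ≥ 2, x_1 = a_1^p, x_2 = a_2^p, y = a_1 a_2^{p-1} + a_3^p, and J = (a_3). Then for every m with 2 ≤ m ≤ p, the element u_m = a_1^{p-m} y^m − a_2^{p-m} x_1 x_2^{m-1} lies in the ideal (x_2, y)^{m-2}·J. Explicitly, u_m = Σ_{j=0}^{m-2} v_j (x_2^{m-2-j} y^j) a_3 with v_j = a_1^{p-1-j} a_2^{p-m+1+j} a_3^{p-1} for 0 ≤ j ≤ m-3 and v_{m-2} = 2 a_1^{p-m+1} a_2^{p-1} a_3^{p-1} + a_1^{p-m} a_3^{2p-1}. -/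
/-- For `A = k[a₁,a₂,a₃]`, `p ≥ 2`, `x₁ = a₁^p`, `x₂ = a₂^p`,
`y = a₁a₂^{p-1} + a₃^p`, `J = (a₃)`, and every `m` with `2 ≤ m ≤ p`, the element
`u_m = a₁^{p-m}y^m − a₂^{p-m}x₁x₂^{m-1}` lies in `(x₂,y)^{m-2}·J`; explicitly
`u_m = Σ_{j=0}^{m-2} v_j (x₂^{m-2-j} y^j) a₃` with
`v_j = a₁^{p-1-j} a₂^{p-m+1+j} a₃^{p-1}` for `0 ≤ j ≤ m-3` and
`v_{m-2} = 2 a₁^{p-m+1} a₂^{p-1} a₃^{p-1} + a₁^{p-m} a₃^{2p-1}`. -/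
theorem stmt_15 {k : Type*} [Field k] (p : ℕ) (hp : 2 ≤ p)
    (m : ℕ) (hm2 : 2 ≤ m) (hmp : m ≤ p) :
    let a₁ : MvPolynomial (Fin 3) k := MvPolynomial.X 0
    let a₂ : MvPolynomial (Fin 3) k := MvPolynomial.X 1
    let a₃ : MvPolynomial (Fin 3) k := MvPolynomial.X 2
    let x₂ : MvPolynomial (Fin 3) k := a₂ ^ p
    let y : MvPolynomial (Fin 3) k := a₁ * a₂ ^ (p - 1) + a₃ ^ p
    let u : MvPolynomial (Fin 3) k :=
      a₁ ^ (p - m) * y ^ m - a₂ ^ (p - m) * (a₁ ^ p) * x₂ ^ (m - 1)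
    let v : ℕ → MvPolynomial (Fin 3) k := fun j =>
      if j = m - 2 then 2 * a₁ ^ (p - m + 1) * a₂ ^ (p - 1) * a₃ ^ (p - 1)
        + a₁ ^ (p - m) * a₃ ^ (2 * p - 1)
      else a₁ ^ (p - 1 - j) * a₂ ^ (p - m + 1 + j) * a₃ ^ (p - 1)
    u ∈ (Ideal.span {x₂, y}) ^ (m - 2) * Ideal.span {a₃} ∧
    u = ∑ j ∈ Finset.range (m - 1), v j * (x₂ ^ (m - 2 - j) * y ^ j) * a₃ := by
  intro a₁ a₂ a₃ x₂ y u v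
  obtain ⟨n, rfl⟩ : ∃ n, m = n + 2 := ⟨m - 2, by omega⟩
  obtain ⟨q, rfl⟩ : ∃ q, p = n + 2 + q := ⟨p - (n + 2), by omega⟩
  have e1 : n + 2 + q - (n + 2) = q := by omega
  have e2 : n + 2 - 1 = n + 1 := by omega
  have e3 : ∀ j : ℕ, n + 2 - 2 - j = n - j := fun j => by omega
  have e4 : n + 2 + q - 1 = n + 1 + q := by omega
  have hy : y = a₁ * a₂ ^ (n + 1 + q) + a₃ ^ (n + 2 + q) := by
    simp only [y, e4]
  have hu : u = a₁ ^ q * (y ^ (n + 2) - (a₁ * a₂ ^ (n + 1 + q)) ^ (n + 2)) := by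
    simp only [u, x₂, e1, e2]
    ring
  have hgeom : y ^ (n + 2) - (a₁ * a₂ ^ (n + 1 + q)) ^ (n + 2)
      = (∑ i ∈ Finset.range (n + 2), y ^ i * (a₁ * a₂ ^ (n + 1 + q)) ^ (n + 2 - 1 - i))
        * a₃ ^ (n + 2 + q) := by
    rw [← geom_sum₂_mul]
    congr 1
    rw [hy]; ring
  have heq : u = ∑ j ∈ Finset.range (n + 2 - 1), v j * (x₂ ^ (n + 2 - 2 - j) * y ^ j) * a₃ := by
    simp only [e2, e3]
    rw [hu, hgeom, Finset.sum_range_succ, Finset.sum_range_succ, Finset.sum_range_succ]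
    have hS : a₁ ^ q * ((∑ i ∈ Finset.range n,
          y ^ i * (a₁ * a₂ ^ (n + 1 + q)) ^ (n + 2 - 1 - i)) * a₃ ^ (n + 2 + q))
        = ∑ j ∈ Finset.range n, v j * (x₂ ^ (n - j) * y ^ j) * a₃ := by
      rw [Finset.sum_mul, Finset.mul_sum]
      refine Finset.sum_congr rfl fun i hi => ?_
      rw [Finset.mem_range] at hi
      obtain ⟨d, rfl⟩ : ∃ d, n = i + (d + 1) := ⟨n - i - 1, by omega⟩
      simp only [v, x₂, if_neg (show ¬ i = i + (d + 1) + 2 - 2 by omega),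
        show i + (d + 1) + 2 - 1 - i = d + 2 by omega,
        show i + (d + 1) - i = d + 1 by omega,
        show i + (d + 1) + 2 + q - 1 - i = d + 2 + q by omega,
        show i + d + 2 + q - i = d + 2 + q by omega,
        show i + (d + 1) + 2 + q - (i + (d + 1) + 2) = q by omega,
        show i + (d + 1) + 2 + q - 1 = i + d + 2 + q by omega]
      ring
    rw [hy] at hS ⊢
    simp only [v, x₂, if_pos (show n = n + 2 - 2 by omega),
      show n + 2 - 1 - n = 1 by omega, show n + 2 - 1 - (n + 1) = 0 by omega,
      show n + 2 + q - (n + 2) = q by omega, show n + 2 + q - 1 = n + 1 + q by omega,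
      show 2 * (n + 2 + q) - 1 = 2 * n + 2 * q + 3 by omega,
      Nat.sub_self, pow_zero, one_mul, mul_one] at hS ⊢
    linear_combination hS
  refine ⟨?_, heq⟩
  rw [heq]
  refine Submodule.sum_mem _ fun j hj => ?_
  rw [Finset.mem_range, e2] at hj
  refine Ideal.mul_mem_mul (Ideal.mul_mem_left _ _ ?_)
    (Ideal.subset_span (by simp))
  have hpow : (Ideal.span {x₂, y} : Ideal (MvPolynomial (Fin 3) k)) ^ (n + 2 - 2)
      = Ideal.span {x₂, y} ^ (n - j) * Ideal.span {x₂, y} ^ j := by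
    rw [← pow_add]; congr 1; omega
  rw [hpow, e3]
  exact Ideal.mul_mem_mul
    (Ideal.pow_mem_pow (Ideal.subset_span (by simp)) _)
    (Ideal.pow_mem_pow (Ideal.subset_span (by simp)) _)
end

section
/- Let k be a field, A = k[a_1,a_2,a_3], p ≥ 2, I = (a_1^p, a_2^p, a_1 a_2^{p-1} + a_3^p), and J = (a_3). Then I^n ∩ J ⊆ I^{n-2}·J for all n ≥ 2, while I^2 ∩ J ⊄ I·J; that is, the weak Artin-Rees number w(J,A;I) equals 2. -/
/-!
Write `k[a₁, a₂, a₃] = R[z]` with `R = k[a₁, a₂]` and `z = a₃`, and put `K = (a₁^p, a₂^p) ⊆ R`,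
`q = a₁ a₂^(p-1)`, so that `I = K·R[z] + (z^p + q)` and `J = (z)`. Over `R[T]`, acting through
`T ↦ z^p`, the ring `R[z]` is free on `1, z, …, z^(p-1)`, and `I` is extended from
`M = (K, T + q) ⊆ R[T]`; so `f ∈ Iⁿ` iff each of the `p` slices of `f` lies in `Mⁿ`.
Multiplying by `z` shifts the slices, and the top one comes back multiplied by `T`. So
`Iⁿ ∩ J ⊆ I^(n-2)·J` comes down to `T·W ∈ Mⁿ → W ∈ M^(n-2)`. After the Taylor shift `T ↦ T - q`
this says `(T - q)·V ∈ (K, T)ⁿ → V ∈ (K, T)^(n-2)`, and that holds because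
`q^(i+1) ∈ K^i`: solve for the coefficients of `V` starting from the top one.

The element `a₁^(p-2) z^p (z^p + 2q)` lies in `I² ∩ J`. Modulo `K` it equals `a₁^(p-2) g²`,
where `g = z^p + q` is monic. If it were in `I·J`, we could divide by `g`, and then `z` would
divide `a₁^(p-2) g`. Comparing constant terms gives `a₁^(p-1) a₂^(p-1) ∈ K`, which is false.
-/

open Polynomial

theorem weakAR_eq_two {A : Type*} [CommRing A] {I J : Ideal A}
    (h : ∀ n, 2 ≤ n → I ^ n ⊓ J ≤ I ^ (n - 2) * J) (h₁ : ¬ I ^ 2 ⊓ J ≤ I * J) :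
    weakAR I J = 2 := by
  refine le_antisymm (Nat.sInf_le ⟨one_le_two, h⟩) (le_csInf ⟨2, one_le_two, h⟩ ?_)
  rintro s ⟨hs, hsJ⟩
  by_contra! hlt
  obtain rfl : s = 1 := by omega
  exact h₁ (by simpa using hsJ 2 one_le_two)

theorem mul_pow_pred_pow_succ_mem_pow {R : Type*} [CommRing R] {K : Ideal R} {x y : R}
    {p : ℕ} (hp : p ≠ 0) (hx : x ^ p ∈ K) (hy : y ^ p ∈ K) (i : ℕ) :
    (x * y ^ (p - 1)) ^ (i + 1) ∈ K ^ i := by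
  induction i using Nat.strong_induction_on with
  | _ i ih =>
    rcases Nat.lt_or_ge i p with hi | hi
    · obtain ⟨d, rfl⟩ : ∃ d, p = i + 1 + d := ⟨p - (i + 1), by omega⟩
      rw [show i + 1 + d - 1 = i + d by omega,
        show (x * y ^ (i + d)) ^ (i + 1) = x ^ (i + 1) * y ^ d * (y ^ (i + 1 + d)) ^ i by ring]
      exact Ideal.mul_mem_left _ _ (Ideal.pow_mem_pow hy i)
    · have hqp : (x * y ^ (p - 1)) ^ p ∈ K ^ p := by
        obtain ⟨m, rfl⟩ : ∃ m, p = m + 1 := ⟨p - 1, by omega⟩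
        rw [Nat.add_sub_cancel, pow_succ',
          show (x * y ^ m) ^ (m + 1) = x ^ (m + 1) * (y ^ (m + 1)) ^ m by ring]
        exact Ideal.mul_mem_mul hx (Ideal.pow_mem_pow hy m)
      have := Ideal.mul_mem_mul hqp (ih (i - p) (by omega))
      rwa [← pow_add, ← pow_add, show p + (i - p + 1) = i + 1 by omega,
        show p + (i - p) = i by omega] at this

theorem pow_sub_two_mul_sq_mem_span_sq {R : Type*} [CommRing R] (x y : R) {p : ℕ} (hp : 2 ≤ p) :
    x ^ (p - 2) * (x * y ^ (p - 1)) ^ 2 ∈ Ideal.span {x ^ p, y ^ p} ^ 2 := by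
  obtain ⟨m, rfl⟩ : ∃ m, p = m + 2 := ⟨p - 2, by omega⟩
  rw [Nat.add_sub_cancel, show m + 2 - 1 = m + 1 by omega, sq,
    show x ^ m * (x * y ^ (m + 1)) ^ 2 = x ^ (m + 2) * (y ^ (m + 2) * y ^ m) by ring]
  exact Ideal.mul_mem_mul (Ideal.subset_span (by simp))
    (Ideal.mul_mem_right _ _ (Ideal.subset_span (by simp)))

theorem Ideal.map_pow_inf_map_le_iff {A B E : Type*} [CommRing A] [CommRing B]
    [EquivLike E A B] [RingEquivClass E A B] (e : E) (I J : Ideal A) (m n : ℕ) :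
    (I.map e) ^ n ⊓ J.map e ≤ (I.map e) ^ m * J.map e ↔ I ^ n ⊓ J ≤ I ^ m * J := by
  rw [← Ideal.map_pow, ← Ideal.map_pow, ← Ideal.map_mul]
  let e' : A ≃+* B := RingEquivClass.toRingEquiv e
  change Ideal.map e' _ ⊓ Ideal.map e' _ ≤ Ideal.map e' _ ↔ _
  simp only [← RingEquiv.idealComapOrderIso_symm_apply, ← OrderIso.map_inf, OrderIso.le_iff_le]

namespace Polynomial

variable {R : Type*} [CommRing R] {p : ℕ} {K : Ideal R} {q : R}

noncomputable def slice (p r : ℕ) (f : R[X]) : R[X] :=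
  ∑ n ∈ Finset.range (f.natDegree + 1), monomial n (f.coeff (n * p + r))

theorem coeff_slice (hp : p ≠ 0) (r : ℕ) (f : R[X]) (n : ℕ) :
    (slice p r f).coeff n = f.coeff (n * p + r) := by
  simp only [slice, finsetSum_coeff, coeff_monomial]
  rw [Finset.sum_eq_single n (fun _ _ h => if_neg h)]
  · simp
  · intro hn
    rw [if_pos rfl, coeff_eq_zero_of_natDegree_lt]
    have := Nat.le_mul_of_pos_right n (Nat.pos_of_ne_zero hp)
    simp only [Finset.mem_range] at hn
    omega

theorem slice_add (hp : p ≠ 0) (r : ℕ) (f g : R[X]) :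
    slice p r (f + g) = slice p r f + slice p r g := by
  ext n; simp [coeff_slice hp]

theorem slice_C_mul (hp : p ≠ 0) (r : ℕ) (a : R) (f : R[X]) :
    slice p r (C a * f) = C a * slice p r f := by
  ext n; simp [coeff_slice hp]

theorem slice_X_mul_succ (hp : p ≠ 0) (r : ℕ) (f : R[X]) :
    slice p (r + 1) (X * f) = slice p r f := by
  ext n; simp [coeff_slice hp, ← add_assoc, coeff_X_mul]

theorem slice_X_mul_zero (hp : p ≠ 0) (f : R[X]) :
    slice p 0 (X * f) = X * slice p (p - 1) f := by
  ext (_ | n)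
  · simp [coeff_slice hp]
  · rw [coeff_slice hp, show (n + 1) * p + 0 = n * p + (p - 1) + 1 by rw [add_mul]; omega,
      coeff_X_mul, coeff_X_mul, coeff_slice hp]

theorem slice_expand (hp : p ≠ 0) {r : ℕ} (hr : r < p) (f : R[X]) :
    slice p r (expand R p f) = if r = 0 then f else 0 := by
  ext n
  rw [coeff_slice hp, coeff_expand (Nat.pos_of_ne_zero hp)]
  by_cases h0 : r = 0
  · simp [h0, Nat.mul_div_cancel _ (Nat.pos_of_ne_zero hp)]
  · have : ¬ p ∣ n * p + r := fun h =>
      h0 (Nat.eq_zero_of_dvd_of_lt ((Nat.dvd_add_right (dvd_mul_left p n)).mp h) hr)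
    simp [h0, this]

theorem sum_expand_slice_mul_X_pow (hp : p ≠ 0) (f : R[X]) :
    ∑ r ∈ Finset.range p, expand R p (slice p r f) * X ^ r = f := by
  ext j
  rw [finsetSum_coeff, Finset.sum_eq_single (j % p)]
  · rw [coeff_mul_X_pow', if_pos (Nat.mod_le j p), coeff_expand (Nat.pos_of_ne_zero hp),
      if_pos (Nat.dvd_sub_mod j), coeff_slice hp, Nat.div_mul_cancel (Nat.dvd_sub_mod j),
      Nat.sub_add_cancel (Nat.mod_le j p)]
  · intro r hr hne
    rw [coeff_mul_X_pow']
    split_ifs with hrj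
    · rw [coeff_expand (Nat.pos_of_ne_zero hp), if_neg]
      rintro ⟨m, hm⟩
      apply hne
      rw [Finset.mem_range] at hr
      rw [show j = r + p * m by omega, Nat.add_mul_mod_self_left, Nat.mod_eq_of_lt hr]
    · rfl
  · intro h
    exact absurd (Finset.mem_range.mpr (Nat.mod_lt j (Nat.pos_of_ne_zero hp))) h

theorem slice_X_mul_mem (hp : p ≠ 0) {M : Ideal R[X]} {f : R[X]}
    (hf : ∀ r < p, slice p r f ∈ M) : ∀ r < p, slice p r (X * f) ∈ M
  | 0, _ => by rw [slice_X_mul_zero hp]; exact M.mul_mem_left _ (hf _ (by omega))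
  | r + 1, hr => by rw [slice_X_mul_succ hp]; exact hf r (by omega)

theorem slice_mul_mem (hp : p ≠ 0) {M : Ideal R[X]} {f : R[X]}
    (hf : ∀ r < p, slice p r f ∈ M) (g : R[X]) : ∀ r < p, slice p r (g * f) ∈ M := by
  induction g using Polynomial.induction_on with
  | C a => intro r hr; rw [slice_C_mul hp]; exact M.mul_mem_left _ (hf r hr)
  | add g₁ g₂ h₁ h₂ =>
    intro r hr
    rw [add_mul, slice_add hp]
    exact add_mem (h₁ r hr) (h₂ r hr)
  | monomial n a h =>
    rw [show C a * X ^ (n + 1) * f = X * (C a * X ^ n * f) by ring]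
    exact slice_X_mul_mem hp h

theorem mem_map_expand_iff (hp : p ≠ 0) (M : Ideal R[X]) (f : R[X]) :
    f ∈ M.map (expand R p) ↔ ∀ r < p, slice p r f ∈ M := by
  refine ⟨fun hf => ?_, fun hf => ?_⟩
  · refine Submodule.span_induction (p := fun f _ => ∀ r < p, slice p r f ∈ M) ?_ ?_ ?_ ?_ hf
    · rintro _ ⟨m, hm, rfl⟩ r hr
      rw [slice_expand hp hr]
      split_ifs
      exacts [hm, M.zero_mem]
    · intro r _
      rw [show slice p r (0 : R[X]) = 0 by ext; simp [coeff_slice hp]]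
      exact M.zero_mem
    · intro f g _ _ hf hg r hr
      rw [slice_add hp]
      exact add_mem (hf r hr) (hg r hr)
    · intro g f _ hf
      exact slice_mul_mem hp hf g
  · rw [← sum_expand_slice_mul_X_pow hp f]
    exact sum_mem fun r hr =>
      Ideal.mul_mem_right _ _ (Ideal.mem_map_of_mem _ (hf r (Finset.mem_range.mp hr)))

theorem map_map_C_sup_span_singleton {F : Type*} [FunLike F R[X] R[X]]
    [AlgHomClass F R R[X] R[X]] (φ : F) (a : R[X]) :
    (K.map C ⊔ Ideal.span {a}).map φ = K.map C ⊔ Ideal.span {φ a} := by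
  change Ideal.map (φ : R[X] →+* R[X]) _ = _
  rw [Ideal.map_sup, Ideal.map_map, Ideal.map_span, Set.image_singleton]
  congr 2
  exact RingHom.ext fun r => by simpa [algebraMap_eq] using AlgHomClass.commutes φ r

theorem coeff_mul_mem_pow {m n : ℕ} {u v : R[X]}
    (hu : ∀ i, u.coeff i ∈ K ^ (m - i)) (hv : ∀ j, v.coeff j ∈ K ^ (n - j)) (c : ℕ) :
    (u * v).coeff c ∈ K ^ (m + n - c) := by
  rw [coeff_mul]
  refine sum_mem fun ij hij => ?_
  rw [Finset.HasAntidiagonal.mem_antidiagonal] at hij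
  refine Ideal.pow_le_pow_right ?_ (pow_add K _ _ ▸ Ideal.mul_mem_mul (hu ij.1) (hv ij.2))
  omega

theorem mem_map_C_sup_span_X_pow_iff {n : ℕ} {u : R[X]} :
    u ∈ (K.map C ⊔ Ideal.span {X}) ^ n ↔ ∀ c, u.coeff c ∈ K ^ (n - c) := by
  refine ⟨fun hu => ?_, fun hu => ?_⟩
  · induction n generalizing u with
    | zero => simp
    | succ n ih =>
      rw [pow_succ] at hu
      refine Submodule.mul_induction_on hu (fun a ha b hb => ?_) (fun a b ha hb c => ?_)
      · obtain ⟨b₁, hb₁, b₂, hb₂, rfl⟩ := Submodule.mem_sup.mp hb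
        refine coeff_mul_mem_pow (ih ha) (fun j => ?_)
        obtain ⟨g, rfl⟩ := Ideal.mem_span_singleton'.mp hb₂
        rcases j with _ | j
        · simpa using Ideal.mem_map_C_iff.mp hb₁ 0
        · simp
      · rw [coeff_add]; exact add_mem (ha c) (hb c)
  · rw [as_sum_range_C_mul_X_pow u]
    refine sum_mem fun c _ => ?_
    have hC : C (u.coeff c) ∈ (K.map C ⊔ Ideal.span {X}) ^ (n - c) :=
      Ideal.pow_right_mono le_sup_left _
        (Ideal.map_pow C K (n - c) ▸ Ideal.mem_map_of_mem C (hu c))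
    have hX : (X : R[X]) ^ c ∈ (K.map C ⊔ Ideal.span {X}) ^ c :=
      Ideal.pow_mem_pow (Ideal.mem_sup_right (Ideal.mem_span_singleton_self X)) c
    have := Ideal.mul_mem_mul hC hX
    rw [← pow_add] at this
    exact Ideal.pow_le_pow_right (by omega) this

theorem mem_pow_sub_two_of_X_sub_C_mul_mem (hq : ∀ i, q ^ (i + 1) ∈ K ^ i) {n : ℕ} {V : R[X]}
    (h : (X - C q) * V ∈ (K.map C ⊔ Ideal.span {X}) ^ n) :
    V ∈ (K.map C ⊔ Ideal.span {X}) ^ (n - 2) := by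
  rw [mem_map_C_sup_span_X_pow_iff] at h ⊢
  have hq' : ∀ i, q ^ i ∈ K ^ (i - 1)
    | 0 => by simp
    | i + 1 => hq i
  have hdiff (c : ℕ) : V.coeff c - q * V.coeff (c + 1) ∈ K ^ (n - (c + 1)) := by
    simpa [sub_mul, coeff_X_mul, coeff_C_mul] using h (c + 1)
  -- `V.coeff c ≡ q * V.coeff (c + 1)` modulo `K ^ (n - c - 1)`: unroll this from the top degree
  have key :
      ∀ d c, V.natDegree < c + d → ∀ i, q ^ i * V.coeff c ∈ K ^ (n + i - (c + 2)) := by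
    intro d
    induction d with
    | zero => intro c hc i; simp [coeff_eq_zero_of_natDegree_lt (by omega : V.natDegree < c)]
    | succ d ih =>
      intro c hc i
      rw [show q ^ i * V.coeff c = q ^ (i + 1) * V.coeff (c + 1) +
        q ^ i * (V.coeff c - q * V.coeff (c + 1)) by ring]
      refine add_mem (Ideal.pow_le_pow_right (by omega) (ih (c + 1) (by omega) (i + 1))) ?_
      have := Ideal.mul_mem_mul (hq' i) (hdiff c)
      rw [← pow_add] at this
      exact Ideal.pow_le_pow_right (by omega) this
  intro c
  simpa [Nat.sub_sub, add_comm 2] using key (V.natDegree + 1) c (by omega) 0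

theorem mem_pow_sub_two_of_X_mul_mem (hq : ∀ i, q ^ (i + 1) ∈ K ^ i)
    {n : ℕ} {W : R[X]} (h : X * W ∈ (K.map C ⊔ Ideal.span {X + C q}) ^ n) :
    W ∈ (K.map C ⊔ Ideal.span {X + C q}) ^ (n - 2) := by
  have hM :
      K.map C ⊔ Ideal.span {X + C q} = (K.map C ⊔ Ideal.span {X}).map (taylorEquiv q) := by
    rw [map_map_C_sup_span_singleton]
    exact congrArg (fun a => _ ⊔ Ideal.span {a}) (taylor_X q).symm
  rw [hM, ← Ideal.map_pow] at h ⊢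
  obtain ⟨V, hV, hVW⟩ := (Ideal.mem_map_of_equiv _ _).mp h
  have hV' : V = (X - C q) * taylor (-q) W := by
    rw [← (taylorEquiv q).symm_apply_apply V, hVW]
    change taylor (-q) (X * W) = _
    rw [taylor_mul, taylor_X, C_neg, sub_eq_add_neg]
  rw [← (taylorEquiv q).apply_symm_apply W]
  exact Ideal.mem_map_of_mem _ (mem_pow_sub_two_of_X_sub_C_mul_mem hq (hV' ▸ hV))

theorem pow_inf_span_X_le_pow_sub_two_mul (hq : ∀ i, q ^ (i + 1) ∈ K ^ i)
    (hp : p ≠ 0) (n : ℕ) :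
    (K.map C ⊔ Ideal.span {X ^ p + C q}) ^ n ⊓ Ideal.span {X} ≤
      (K.map C ⊔ Ideal.span {X ^ p + C q}) ^ (n - 2) * Ideal.span {X} := by
  have hI : K.map C ⊔ Ideal.span {X ^ p + C q} =
      (K.map C ⊔ Ideal.span {X + C q}).map (expand R p) := by
    rw [map_map_C_sup_span_singleton, map_add, expand_X, expand_C]
  intro f hfX
  obtain ⟨hf, hX⟩ := Submodule.mem_inf.mp hfX
  obtain ⟨h, rfl⟩ := Ideal.mem_span_singleton'.mp hX
  refine Ideal.mul_mem_mul ?_ (Ideal.mem_span_singleton_self X)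
  rw [hI, ← Ideal.map_pow, mem_map_expand_iff hp] at hf ⊢
  rw [mul_comm] at hf
  intro r hr
  rcases Nat.lt_or_ge (r + 1) p with hr' | hr'
  · rw [← slice_X_mul_succ hp]
    exact Ideal.pow_le_pow_right (Nat.sub_le n 2) (hf (r + 1) hr')
  · obtain rfl : r = p - 1 := by omega
    refine mem_pow_sub_two_of_X_mul_mem hq ?_
    rw [← slice_X_mul_zero hp]
    exact hf 0 (Nat.pos_of_ne_zero hp)

theorem eq_zero_of_C_mul_sq_mem_span_mul_X {S : Type*} [CommRing S] {b s : S} (hp : p ≠ 0)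
    (h : C b * (X ^ p + C s) ^ 2 ∈ Ideal.span {(X ^ p + C s) * X}) : b * s = 0 := by
  obtain ⟨c, hc⟩ := Ideal.mem_span_singleton.mp h
  have hcancel : C b * (X ^ p + C s) = X * c :=
    (monic_X_pow_add_C s hp).isRegular.left <| show (X ^ p + C s) * _ = (X ^ p + C s) * _ by
      linear_combination hc
  simpa [coeff_X_pow, hp.symm] using congrArg (coeff · 0) hcancel

theorem not_pow_two_inf_span_X_le_mul {b : R} (hb : b * q ^ 2 ∈ K ^ 2)
    (hbq : b * q ∉ K) (hp : p ≠ 0) :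
    ¬ (K.map C ⊔ Ideal.span {X ^ p + C q}) ^ 2 ⊓ Ideal.span {X} ≤
      (K.map C ⊔ Ideal.span {X ^ p + C q}) * Ideal.span {X} := by
  set G : R[X] := X ^ p + C q
  set w : R[X] := C b * X ^ p * (X ^ p + C (2 * q))
  have hw : w = C b * G ^ 2 - C (b * q ^ 2) := by
    simp only [w, G, map_mul, map_pow, map_ofNat]; ring
  have hwI : w ∈ (K.map C ⊔ Ideal.span {G}) ^ 2 := by
    rw [hw]
    refine sub_mem (Ideal.mul_mem_left _ _ (Ideal.pow_mem_pow ?_ 2))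
      (Ideal.pow_right_mono le_sup_left 2 (Ideal.map_pow C K 2 ▸ Ideal.mem_map_of_mem C hb))
    exact Ideal.mem_sup_right (Ideal.mem_span_singleton_self G)
  have hwX : w ∈ Ideal.span {X} :=
    Ideal.mem_span_singleton.mpr (((dvd_pow_self X hp).mul_left _).mul_right _)
  intro hle
  -- modulo `K` the ideal becomes principal, generated by the monic image of `G`
  set π : R[X] →+* (R ⧸ K)[X] := mapRingHom (Ideal.Quotient.mk K)
  set G' : (R ⧸ K)[X] := X ^ p + C (Ideal.Quotient.mk K q)
  have hπG : π G = G' := by simp [π, G, G']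
  have hπI : (K.map C ⊔ Ideal.span {G}).map π ≤ Ideal.span {G'} := by
    rw [Ideal.map_sup, Ideal.map_map, Ideal.map_span, Set.image_singleton, hπG]
    refine sup_le (Ideal.map_le_iff_le_comap.mpr fun a ha => ?_) le_rfl
    simp [π, Ideal.Quotient.eq_zero_iff_mem.mpr ha]
  have hπw : π w = C (Ideal.Quotient.mk K b) * G' ^ 2 := by
    have : π (C (b * q ^ 2)) = 0 := by
      rw [coe_mapRingHom, map_C, C_eq_zero, Ideal.Quotient.eq_zero_iff_mem]
      exact Ideal.pow_le_self two_ne_zero hb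
    rw [hw, map_sub, this, sub_zero, map_mul, map_pow, hπG]
    simp [π]
  have hmem := Ideal.mem_map_of_mem π (hle ⟨hwI, hwX⟩)
  rw [Ideal.map_mul, Ideal.map_span, Set.image_singleton, show π X = X by simp [π]] at hmem
  have := Ideal.span_singleton_mul_span_singleton G' X ▸ Ideal.mul_mono_left hπI hmem
  rw [hπw] at this
  rw [← Ideal.Quotient.eq_zero_iff_mem, map_mul] at hbq
  exact hbq (eq_zero_of_C_mul_sq_mem_span_mul_X hp this)

end Polynomial

namespace MvPolynomial

variable (k : Type*) [CommRing k]

noncomputable def lastVarEquiv : MvPolynomial (Fin 3) k ≃ₐ[k] (MvPolynomial (Fin 2) k)[X] :=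
  (renameEquiv k (finRotate 3)).trans (finSuccEquiv k 2)

variable {k}

theorem lastVarEquiv_X_zero : lastVarEquiv k (X 0) = Polynomial.C (X 0) := by
  rw [lastVarEquiv, AlgEquiv.trans_apply, renameEquiv_apply, rename_X,
    show finRotate 3 0 = (0 : Fin 2).succ from rfl, finSuccEquiv_X_succ]

theorem lastVarEquiv_X_one : lastVarEquiv k (X 1) = Polynomial.C (X 1) := by
  rw [lastVarEquiv, AlgEquiv.trans_apply, renameEquiv_apply, rename_X,
    show finRotate 3 1 = (1 : Fin 2).succ from rfl, finSuccEquiv_X_succ]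

theorem lastVarEquiv_X_two : lastVarEquiv k (X 2) = Polynomial.X := by
  rw [lastVarEquiv, AlgEquiv.trans_apply, renameEquiv_apply, rename_X,
    show finRotate 3 2 = 0 from rfl, finSuccEquiv_X_zero]

theorem X_pow_mul_X_pow_notMem_span {σ k : Type*} [CommSemiring k] [Nontrivial k]
    {i j : σ} (hij : i ≠ j) {a b p : ℕ} (ha : a < p) (hb : b < p) :
    (X i ^ a * X j ^ b : MvPolynomial σ k) ∉ Ideal.span {X i ^ p, X j ^ p} := by
  classical
  have hspan : ({X i ^ p, X j ^ p} : Set (MvPolynomial σ k)) =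
      (fun s => monomial s (1 : k)) '' {Finsupp.single i p, Finsupp.single j p} := by
    simp [Set.image_insert_eq, X_pow_eq_monomial]
  rw [hspan, mem_ideal_span_monomial_image, X_pow_eq_monomial, X_pow_eq_monomial, monomial_mul,
    one_mul, support_monomial, if_neg one_ne_zero]
  simp only [Finset.mem_singleton, forall_eq, Set.mem_insert_iff, Set.mem_singleton_iff,
    exists_eq_or_imp, exists_eq_left, not_or, Finsupp.single_le_iff]
  simp [hij, hij.symm, ha, hb]

end MvPolynomial

open MvPolynomial in
/-- For `A = k[a₁,a₂,a₃]`, `p ≥ 2`, `I = (a₁^p, a₂^p, a₁a₂^{p-1} + a₃^p)`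
and `J = (a₃)`: `Iⁿ ∩ J ⊆ I^{n-2}·J` for all `n ≥ 2`, while `I² ∩ J ⊄ I·J`; that is,
the weak Artin-Rees number `w(J,A;I)` equals `2`. -/
theorem stmt_16 {k : Type*} [Field k] (p : ℕ) (hp : 2 ≤ p) :
    let a₁ : MvPolynomial (Fin 3) k := MvPolynomial.X 0
    let a₂ : MvPolynomial (Fin 3) k := MvPolynomial.X 1
    let a₃ : MvPolynomial (Fin 3) k := MvPolynomial.X 2
    let I : Ideal (MvPolynomial (Fin 3) k) :=
      Ideal.span {a₁ ^ p, a₂ ^ p, a₁ * a₂ ^ (p - 1) + a₃ ^ p}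
    let J : Ideal (MvPolynomial (Fin 3) k) := Ideal.span {a₃}
    (∀ n, 2 ≤ n → I ^ n ⊓ J ≤ I ^ (n - 2) * J) ∧
    ¬ (I ^ 2 ⊓ J ≤ I * J) ∧
    weakAR I J = 2 := by
  intro a₁ a₂ a₃ I J
  set K : Ideal (MvPolynomial (Fin 2) k) := Ideal.span {X 0 ^ p, X 1 ^ p}
  set q : MvPolynomial (Fin 2) k := X 0 * X 1 ^ (p - 1)
  have hI : I.map (lastVarEquiv k) =
      K.map Polynomial.C ⊔ Ideal.span {Polynomial.X ^ p + Polynomial.C q} := by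
    simp only [I, K, Ideal.map_span, Set.image_insert_eq, Set.image_singleton, map_pow, map_add,
      map_mul, a₁, a₂, a₃, lastVarEquiv_X_zero, lastVarEquiv_X_one, lastVarEquiv_X_two,
      ← Ideal.span_union, Set.insert_union, Set.singleton_union, q, add_comm]
  have hJ : J.map (lastVarEquiv k) = Ideal.span {Polynomial.X} := by
    rw [Ideal.map_span, Set.image_singleton, lastVarEquiv_X_two]
  have h₁ : ∀ n, 2 ≤ n → I ^ n ⊓ J ≤ I ^ (n - 2) * J := fun n _ => by
    rw [← Ideal.map_pow_inf_map_le_iff (lastVarEquiv k), hI, hJ]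
    refine Polynomial.pow_inf_span_X_le_pow_sub_two_mul ?_ (by omega) n
    exact mul_pow_pred_pow_succ_mem_pow (by omega) (Ideal.subset_span (by simp))
      (Ideal.subset_span (by simp))
  have h₂ : ¬ I ^ 2 ⊓ J ≤ I * J := by
    have := Ideal.map_pow_inf_map_le_iff (lastVarEquiv k) I J 1 2
    rw [pow_one, pow_one, hI, hJ] at this
    rw [← this]
    refine Polynomial.not_pow_two_inf_span_X_le_mul (pow_sub_two_mul_sq_mem_span_sq _ _ hp) ?_
      (by omega)
    rw [← mul_assoc, ← pow_succ]
    exact X_pow_mul_X_pow_notMem_span (by decide) (by omega) (by omega)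
  exact ⟨h₁, h₂, weakAR_eq_two h₁ h₂⟩
end
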